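/- Let κ ∈ ℝ, M ∈ ℕ, let Ω ⊆ ℝ² be open, (x*,y*) ∈ Ω, and let u : ℝ² → ℂ be (M+1)-times continuously differentiable on Ω. Set f := Δu + κ²u on Ω (where Δ = ∂²/∂x² + ∂²/∂y²). Then for every pair (m,n) ∈ ℕ×ℕ with (n,m) ∈ Λ_{M+1}^2 (i.e. n ≥ 2 and m+n ≤ M+1): u^{(m,n)} = (−1)^{⌊n/2⌋} Σ_{q=0}^{⌊n/2⌋} C(⌊n/2⌋,q) κ^{2q} u^{(2⌊n/2⌋+m−2q, odd(n))} + Σ_{q=1}^{⌊n/2⌋} Σ_{j=0}^{q−1} (−1)^{q−1} C(q−1,j) κ^{2(q−j−1)} f^{(m+2j, n−2q)}, where all derivatives are evaluated at (x*,y*) and C(a,b) is the binomial coefficient. -/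

import Mathlib

open scoped BigOperators
open Complex

/-- The index set `Λ_N = {(m,n) ∈ ℕ×ℕ : m+n ≤ N}`. -/
def Lam (N : ℕ) : Finset (ℕ × ℕ) :=
  (Finset.range (N + 1) ×ˢ Finset.range (N + 1)).filter (fun p => p.1 + p.2 ≤ N)

/-- `Λ_N^1 = {(m,n) ∈ Λ_N : m ≤ 1}`. -/
def Lam1 (N : ℕ) : Finset (ℕ × ℕ) := (Lam N).filter (fun p => p.1 ≤ 1)

/-- `Λ_N^2 = Λ_N \ Λ_N^1 = {(m,n) ∈ Λ_N : m ≥ 2}`. -/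
def Lam2 (N : ℕ) : Finset (ℕ × ℕ) := (Lam N).filter (fun p => 2 ≤ p.1)

/-- Mixed partial derivative `u^{(m,n)} = ∂^{m+n} u / ∂x^m ∂y^n` at `(x,y)`. -/
noncomputable def pd (u : ℝ × ℝ → ℂ) (m n : ℕ) (x y : ℝ) : ℂ :=
  iteratedDeriv m (fun s => iteratedDeriv n (fun t => u (s, t)) y) x

/-- `f = Δu + κ² u`. -/
noncomputable def helm (κ : ℝ) (u : ℝ × ℝ → ℂ) : ℝ × ℝ → ℂ :=
  fun p => pd u 2 0 p.1 p.2 + pd u 0 2 p.1 p.2 + (κ : ℂ) ^ 2 * u p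

/-- The polynomial `G_{N,m,n}(x,y)`; the sum is empty (0) when `m+n > N`. -/
noncomputable def Gpoly (κ : ℝ) (N m n : ℕ) (x y : ℂ) : ℂ :=
  if m + n ≤ N then
    ∑ p ∈ Finset.range ((N - m - n) / 2 + 1),
      ∑ ℓ ∈ Finset.Icc p (p + n / 2),
        (-1 : ℂ) ^ ℓ * (Nat.choose ℓ p : ℂ) * (κ : ℂ) ^ (2 * p) *
          x ^ (m + 2 * ℓ) * y ^ (n + 2 * p - 2 * ℓ) /
          ((Nat.factorial (m + 2 * ℓ) : ℂ) * (Nat.factorial (n + 2 * p - 2 * ℓ) : ℂ))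
  else 0

/-- The polynomial `H_{N,m,n}(x,y)`; the sum is empty (0) when `m+n+2 > N`. -/
noncomputable def Hpoly (κ : ℝ) (N m n : ℕ) (x y : ℂ) : ℂ :=
  if m + n + 2 ≤ N then
    ∑ p ∈ Finset.range ((N - 2 - m - n) / 2 + 1),
      ∑ ℓ ∈ Finset.Icc (p + 1) (p + n / 2 + 1),
        (-1 : ℂ) ^ (ℓ - 1) * (Nat.choose (ℓ - 1) p : ℂ) * (κ : ℂ) ^ (2 * p) *
          x ^ (m + 2 * ℓ) * y ^ (2 * p + n + 2 - 2 * ℓ) /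
          ((Nat.factorial (m + 2 * ℓ) : ℂ) * (Nat.factorial (2 * p + n + 2 - 2 * ℓ) : ℂ))
  else 0


open Set Finset

/-!
Differentiating the Helmholtz equation `∂ᵧ²u = f - ∂ₓ²u - κ²u` `a` times in `x` and `b` times
in `y` (which needs the mixed partial derivatives of the `C^{M+1}` function `u` to commute) gives
`u^{(a,b+2)} = f^{(a,b)} - u^{(a+2,b)} - κ² u^{(a,b)}`. For sequences indexed by the `x`-order
this is `e (b + 2) = f_b - L (e b)` with `L = (shift by 2) + κ²`. Unrolled, it reads
`u^{(·,n)} = (-L)^⌊n/2⌋ u^{(·,odd n)} + ∑_{q=1}^{⌊n/2⌋} (-L)^(q-1) f^{(·,n-2q)}`, and the binomial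
theorem for the commuting operators `shift` and `κ²` expands the powers of `L` into the stated sums.
-/

section DirDeriv

variable {E F : Type*} [NormedAddCommGroup E] [NormedSpace ℝ E] [NormedAddCommGroup F]
  [NormedSpace ℝ F] {s : Set E} {g h : E → F} {v w : E}

noncomputable def dirDeriv (v : E) (g : E → F) : E → F := fun p => fderiv ℝ g p v

theorem ContDiffOn.dirDeriv_of_isOpen {k : ℕ} (hs : IsOpen s) (hg : ContDiffOn ℝ (k + 1) g s) :
    ContDiffOn ℝ k (dirDeriv v g) s :=
  (hg.fderiv_of_isOpen hs le_rfl).clm_apply contDiffOn_const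

theorem ContDiffOn.dirDeriv_iterate_of_isOpen {j k : ℕ} (hs : IsOpen s)
    (hg : ContDiffOn ℝ (j + k : ℕ) g s) :
    ContDiffOn ℝ k ((dirDeriv v)^[j] g) s := by
  induction j generalizing g with
  | zero => simpa using hg
  | succ j ih =>
    refine ih (ContDiffOn.dirDeriv_of_isOpen hs ?_)
    rwa [add_right_comm] at hg

theorem Set.EqOn.dirDeriv_of_isOpen (hs : IsOpen s) (hgh : EqOn g h s) :
    EqOn (dirDeriv v g) (dirDeriv v h) s := fun p hp => by
  simp only [dirDeriv, (hgh.eventuallyEq_of_mem (hs.mem_nhds hp)).fderiv_eq]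

theorem Set.EqOn.dirDeriv_iterate_of_isOpen (hs : IsOpen s) (hgh : EqOn g h s) (j : ℕ) :
    EqOn ((dirDeriv v)^[j] g) ((dirDeriv v)^[j] h) s := by
  induction j with
  | zero => exact hgh
  | succ j ih => simpa only [Function.iterate_succ_apply'] using ih.dirDeriv_of_isOpen hs

theorem dirDeriv_iterate_add {j : ℕ} (hs : IsOpen s) (hg : ContDiffOn ℝ j g s)
    (hh : ContDiffOn ℝ j h s) :
    EqOn ((dirDeriv v)^[j] (g + h)) ((dirDeriv v)^[j] g + (dirDeriv v)^[j] h) s := by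
  induction j generalizing g h with
  | zero => exact fun _ _ => rfl
  | succ j ih =>
    have hstep : EqOn (dirDeriv v (g + h)) (dirDeriv v g + dirDeriv v h) s := fun p hp => by
      have hd := fun {f : E → F} (hf : ContDiffOn ℝ (j + 1) f s) =>
        (hf.contDiffAt (hs.mem_nhds hp)).differentiableAt (by simp)
      simp [dirDeriv, fderiv_add (hd hg) (hd hh)]
    intro p hp
    simp only [Function.iterate_succ_apply]
    rw [hstep.dirDeriv_iterate_of_isOpen hs j hp,
      ih (hg.dirDeriv_of_isOpen hs) (hh.dirDeriv_of_isOpen hs) hp]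

theorem dirDeriv_iterate_const_smul {R : Type*} [Semiring R] [Module R F] [SMulCommClass ℝ R F]
    [ContinuousConstSMul R F] {j : ℕ} (hs : IsOpen s) (hg : ContDiffOn ℝ j g s) (c : R) :
    EqOn ((dirDeriv v)^[j] (c • g)) (c • (dirDeriv v)^[j] g) s := by
  induction j generalizing g with
  | zero => exact fun _ _ => rfl
  | succ j ih =>
    have hstep : EqOn (dirDeriv v (c • g)) (c • dirDeriv v g) s := fun p hp => by
      have hd := (hg.contDiffAt (hs.mem_nhds hp)).differentiableAt (by simp)
      simp [dirDeriv, fderiv_const_smul hd]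
    intro p hp
    simp only [Function.iterate_succ_apply]
    rw [hstep.dirDeriv_iterate_of_isOpen hs j hp, ih (hg.dirDeriv_of_isOpen hs) hp]

theorem dirDeriv_dirDeriv_apply {p : E} (hg : DifferentiableAt ℝ (fderiv ℝ g) p) :
    dirDeriv v (dirDeriv w g) p = fderiv ℝ (fderiv ℝ g) p v w := by
  change fderiv ℝ (fun q => fderiv ℝ g q w) p v = _
  simp [fderiv_clm_apply hg (differentiableAt_const w)]

theorem dirDeriv_comm (hs : IsOpen s) (hg : ContDiffOn ℝ 2 g s) :
    EqOn (dirDeriv v (dirDeriv w g)) (dirDeriv w (dirDeriv v g)) s := fun p hp => by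
  have hg₂ := hg.contDiffAt (hs.mem_nhds hp)
  have hd : DifferentiableAt ℝ (fderiv ℝ g) p :=
    (hg₂.fderiv_right (m := 1) le_rfl).differentiableAt one_ne_zero
  rw [dirDeriv_dirDeriv_apply hd, dirDeriv_dirDeriv_apply hd,
    hg₂.isSymmSndFDerivAt (by simp)]

theorem dirDeriv_iterate_comm {j : ℕ} (hs : IsOpen s) (hg : ContDiffOn ℝ (j + 1) g s) :
    EqOn ((dirDeriv w)^[j] (dirDeriv v g)) (dirDeriv v ((dirDeriv w)^[j] g)) s := by
  induction j generalizing g with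
  | zero => exact fun _ _ => rfl
  | succ j ih =>
    intro p hp
    have hg₂ : ContDiffOn ℝ 2 g s := hg.of_le (by norm_cast; omega)
    simp only [Function.iterate_succ_apply]
    rw [((dirDeriv_comm hs hg₂).dirDeriv_iterate_of_isOpen hs j) hp,
      ih (hg.dirDeriv_of_isOpen (k := j + 1) hs) hp]

theorem dirDeriv_iterate_iterate_comm {i j : ℕ} (hs : IsOpen s)
    (hg : ContDiffOn ℝ (i + j : ℕ) g s) :
    EqOn ((dirDeriv w)^[j] ((dirDeriv v)^[i] g)) ((dirDeriv v)^[i] ((dirDeriv w)^[j] g)) s := by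
  induction i generalizing g with
  | zero => exact fun _ _ => rfl
  | succ i ih =>
    intro p hp
    have hcomm := (dirDeriv_iterate_comm (v := v) (w := w) (j := j) hs
      (hg.of_le (by norm_cast; omega))).dirDeriv_iterate_of_isOpen (v := v) hs i
    simp only [Function.iterate_succ_apply]
    rw [ih (ContDiffOn.dirDeriv_of_isOpen (k := i + j) hs (by rwa [add_right_comm] at hg)) hp,
      hcomm hp]

theorem iteratedDeriv_comp_eq_dirDeriv_iterate {γ : ℝ → E} (hγ : ∀ t, HasDerivAt γ v t)
    (hs : IsOpen s) {n : ℕ} (hg : ContDiffOn ℝ n g s) {t : ℝ} (ht : γ t ∈ s) :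
    iteratedDeriv n (g ∘ γ) t = (dirDeriv v)^[n] g (γ t) := by
  induction n generalizing g with
  | zero => rfl
  | succ n ih =>
    have hγs : IsOpen (γ ⁻¹' s) :=
      hs.preimage (continuous_iff_continuousAt.2 fun t => (hγ t).continuousAt)
    have hderiv : EqOn (deriv (g ∘ γ)) (dirDeriv v g ∘ γ) (γ ⁻¹' s) := fun t' ht' =>
      (((hg.contDiffAt (hs.mem_nhds ht')).differentiableAt (by simp)).hasFDerivAt.comp_hasDerivAt
        t' (hγ t')).deriv
    rw [iteratedDeriv_succ', hderiv.iteratedDeriv_of_isOpen hγs n ht, ih (hg.dirDeriv_of_isOpen hs),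
      Function.iterate_succ_apply]

end DirDeriv

namespace Helmholtz

section ShiftOperator

variable {R : Type*} [CommRing R]

noncomputable def shift2 : Module.End R (ℕ → R) := LinearMap.funLeft R R (· + 2)

theorem shift2_pow_apply (i : ℕ) (g : ℕ → R) (m : ℕ) :
    (shift2 ^ i) g m = g (m + 2 * i) := by
  induction i generalizing m with
  | zero => simp
  | succ i ih =>
    rw [pow_succ', Module.End.mul_apply]
    change (shift2 ^ i) g (m + 2) = _
    rw [ih]
    ring_nf

-- On the sequence `m ↦ u^{(m,n)}` of `x`-derivatives, `shiftAdd κ²` acts as `∂ₓ² + κ²`.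
noncomputable def shiftAdd (c : R) : Module.End R (ℕ → R) := shift2 + algebraMap R _ c

theorem shiftAdd_apply (c : R) (g : ℕ → R) (m : ℕ) : shiftAdd c g m = g (m + 2) + c * g m := by
  simp [shiftAdd, shift2, LinearMap.funLeft_apply]

theorem shiftAdd_pow_apply (c : R) (k : ℕ) (g : ℕ → R) (m : ℕ) :
    (shiftAdd c ^ k) g m = ∑ j ∈ range (k + 1), (k.choose j : R) * c ^ (k - j) * g (m + 2 * j) := by
  rw [shiftAdd, (Algebra.commute_algebraMap_right c shift2).add_pow]
  simp only [LinearMap.sum_apply, Finset.sum_apply, Module.End.mul_apply, ← map_pow,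
    Module.algebraMap_end_apply, Module.End.natCast_apply, map_nsmul, map_smul]
  refine sum_congr rfl fun j _ => ?_
  simp only [Pi.smul_apply, shift2_pow_apply, smul_eq_mul, nsmul_eq_mul]
  ring

-- The solution of `e (n + 2) = F n - shiftAdd c (e n)` with `e 0 = U 0` and `e 1 = U 1`.
noncomputable def recSol (c : R) (U F : ℕ → ℕ → R) (n : ℕ) : ℕ → R :=
  ((-shiftAdd c) ^ (n / 2)) (U (n % 2)) +
    ∑ i ∈ range (n / 2), ((-shiftAdd c) ^ i) (F (n - 2 - 2 * i))

theorem recSol_of_lt_two (c : R) (U F : ℕ → ℕ → R) {n : ℕ} (hn : n < 2) :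
    recSol c U F n = U n := by
  simp [recSol, Nat.div_eq_of_lt hn, Nat.mod_eq_of_lt hn]

theorem recSol_add_two (c : R) (U F : ℕ → ℕ → R) (n : ℕ) :
    recSol c U F (n + 2) = F n - shiftAdd c (recSol c U F n) := by
  have hdiv : (n + 2) / 2 = n / 2 + 1 := by omega
  have hmod : (n + 2) % 2 = n % 2 := by omega
  have hidx : ∀ i, n + 2 - 2 - 2 * (i + 1) = n - 2 - 2 * i := by omega
  simp only [recSol, hdiv, hmod, sum_range_succ', hidx, pow_succ', Module.End.mul_apply,
    map_add, map_sum, pow_zero, Module.End.one_apply, LinearMap.neg_apply]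
  simp only [sum_neg_distrib, add_tsub_cancel_right, mul_zero, tsub_zero]
  abel

theorem recSol_apply (κ : R) (U F : ℕ → ℕ → R) (n m : ℕ) :
    recSol (κ ^ 2) U F n m =
      (-1) ^ (n / 2) * ∑ q ∈ range (n / 2 + 1),
          ((n / 2).choose q : R) * κ ^ (2 * q) * U (n % 2) (2 * (n / 2) + m - 2 * q)
        + ∑ q ∈ Icc 1 (n / 2), ∑ j ∈ range q,
          (-1) ^ (q - 1) * ((q - 1).choose j : R) * κ ^ (2 * (q - j - 1)) *
            F (n - 2 * q) (m + 2 * j) := by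
  have neg_pow_apply : ∀ k g,
      ((-shiftAdd (κ ^ 2)) ^ k) g m = (-1) ^ k * (shiftAdd (κ ^ 2) ^ k) g m := fun k g => by
    rw [← neg_one_smul R (shiftAdd _), smul_pow]
    rfl
  have hU : ∑ j ∈ range (n / 2 + 1), ((n / 2).choose j : R) * (κ ^ 2) ^ (n / 2 - j) *
        U (n % 2) (m + 2 * j)
      = ∑ q ∈ range (n / 2 + 1),
          ((n / 2).choose q : R) * κ ^ (2 * q) * U (n % 2) (2 * (n / 2) + m - 2 * q) := by
    rw [← sum_range_reflect]
    refine sum_congr rfl fun q hq => ?_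
    have hq := mem_range.1 hq
    rw [add_tsub_cancel_right, Nat.choose_symm (by omega), ← pow_mul, Nat.sub_sub_self (by omega),
      show m + 2 * (n / 2 - q) = 2 * (n / 2) + m - 2 * q by omega]
  have hF : ∑ i ∈ range (n / 2), ((-shiftAdd (κ ^ 2)) ^ i) (F (n - 2 - 2 * i)) m
      = ∑ q ∈ Icc 1 (n / 2), ∑ j ∈ range q,
          (-1) ^ (q - 1) * ((q - 1).choose j : R) * κ ^ (2 * (q - j - 1)) *
            F (n - 2 * q) (m + 2 * j) := by
    rw [← Finset.Ico_add_one_right_eq_Icc, sum_Ico_eq_sum_range, Nat.add_sub_cancel]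
    refine sum_congr rfl fun i _ => ?_
    rw [neg_pow_apply, shiftAdd_pow_apply, mul_sum, add_tsub_cancel_left, add_comm 1 i]
    refine sum_congr rfl fun j hj => ?_
    rw [show n - 2 * (i + 1) = n - 2 - 2 * i by omega, show i + 1 - j - 1 = i - j by omega,
      pow_mul]
    ring
  rw [recSol, Pi.add_apply, Finset.sum_apply, neg_pow_apply, shiftAdd_pow_apply, hU, hF]

end ShiftOperator

section Plane

local notation "∂ₓ" => dirDeriv ((1 : ℝ), (0 : ℝ))
local notation "∂ᵧ" => dirDeriv ((0 : ℝ), (1 : ℝ))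

variable {Ω : Set (ℝ × ℝ)} {u : ℝ × ℝ → ℂ} {N : ℕ}

theorem pd_eq_dirDeriv_iterate (hΩ : IsOpen Ω) (hu : ContDiffOn ℝ N u Ω) {m n : ℕ}
    (hmn : m + n ≤ N) {x y : ℝ} (hxy : (x, y) ∈ Ω) :
    pd u m n x y = ∂ₓ^[m] (∂ᵧ^[n] u) (x, y) := by
  have hslice : EqOn (fun s => iteratedDeriv n (fun t => u (s, t)) y)
      (fun s => ∂ᵧ^[n] u (s, y)) {s | (s, y) ∈ Ω} := fun s hs =>
    iteratedDeriv_comp_eq_dirDeriv_iterate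
      (fun t => (hasDerivAt_const t s).prodMk (hasDerivAt_id t)) hΩ
      (hu.of_le (by exact_mod_cast (by omega : n ≤ N))) hs
  have hu' : ContDiffOn ℝ (n + m : ℕ) u Ω := hu.of_le (by exact_mod_cast (by omega : n + m ≤ N))
  rw [pd, hslice.iteratedDeriv_of_isOpen (hΩ.preimage (by fun_prop)) m hxy]
  exact iteratedDeriv_comp_eq_dirDeriv_iterate
    (fun s => (hasDerivAt_id s).prodMk (hasDerivAt_const s y)) hΩ
    (hu'.dirDeriv_iterate_of_isOpen hΩ) hxy

theorem helm_eqOn (κ : ℝ) (hΩ : IsOpen Ω) (hu : ContDiffOn ℝ N u Ω) (hN : 2 ≤ N) :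
    EqOn (helm κ u) (∂ₓ^[2] u + ∂ᵧ^[2] u + (κ : ℂ) ^ 2 • u) Ω := by
  rintro ⟨x, y⟩ hxy
  rw [helm, pd_eq_dirDeriv_iterate hΩ hu (by omega) hxy,
    pd_eq_dirDeriv_iterate hΩ hu (by omega) hxy]
  rfl

theorem contDiffOn_helm (κ : ℝ) (hΩ : IsOpen Ω) {k : ℕ} (hu : ContDiffOn ℝ (k + 2 : ℕ) u Ω) :
    ContDiffOn ℝ k (helm κ u) Ω := by
  have hu₂ : ContDiffOn ℝ (2 + k : ℕ) u Ω := add_comm k 2 ▸ hu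
  have hsum : ContDiffOn ℝ k (∂ₓ^[2] u + ∂ᵧ^[2] u + (κ : ℂ) ^ 2 • u) Ω :=
    ((hu₂.dirDeriv_iterate_of_isOpen hΩ).add (hu₂.dirDeriv_iterate_of_isOpen hΩ)).add
      (ContDiffOn.const_smul ((κ : ℂ) ^ 2) (hu.of_le (m := k) (by norm_cast; omega)))
  exact hsum.congr (helm_eqOn κ hΩ hu (by omega))

theorem dirDeriv_iterate_helm (κ : ℝ) (hΩ : IsOpen Ω) {a b : ℕ}
    (hu : ContDiffOn ℝ (a + b + 2 : ℕ) u Ω) :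
    EqOn (∂ₓ^[a] (∂ᵧ^[b] (helm κ u)))
      (∂ₓ^[a + 2] (∂ᵧ^[b] u) + ∂ₓ^[a] (∂ᵧ^[b + 2] u) + (κ : ℂ) ^ 2 • ∂ₓ^[a] (∂ᵧ^[b] u)) Ω := by
  have hlin : ∀ (v : ℝ × ℝ) (j : ℕ) {f g h : ℝ × ℝ → ℂ}, ContDiffOn ℝ j f Ω →
      ContDiffOn ℝ j g Ω → ContDiffOn ℝ j h Ω →
      EqOn ((dirDeriv v)^[j] (f + g + (κ : ℂ) ^ 2 • h))
        ((dirDeriv v)^[j] f + (dirDeriv v)^[j] g + (κ : ℂ) ^ 2 • (dirDeriv v)^[j] h) Ω :=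
    fun v j f g h hf hg hh p hp => by
      rw [dirDeriv_iterate_add (g := f + g) (h := (κ : ℂ) ^ 2 • h) hΩ (hf.add hg)
          (hh.const_smul ((κ : ℂ) ^ 2)) hp, Pi.add_apply,
        dirDeriv_iterate_add hΩ hf hg hp, dirDeriv_iterate_const_smul hΩ hh _ hp]
      rfl
  have hu₂ : ContDiffOn ℝ (2 + (b + a) : ℕ) u Ω := hu.of_le (by norm_cast; omega)
  have hA : ContDiffOn ℝ (b + a : ℕ) (∂ₓ^[2] u) Ω := hu₂.dirDeriv_iterate_of_isOpen hΩ
  have hB : ContDiffOn ℝ (b + a : ℕ) (∂ᵧ^[2] u) Ω := hu₂.dirDeriv_iterate_of_isOpen hΩ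
  have hu₀ : ContDiffOn ℝ (b + a : ℕ) u Ω := hu.of_le (by norm_cast; omega)
  have hcomm : EqOn (∂ᵧ^[b] (∂ₓ^[2] u)) (∂ₓ^[2] (∂ᵧ^[b] u)) Ω :=
    dirDeriv_iterate_iterate_comm hΩ (hu.of_le (by norm_cast; omega))
  intro p hp
  rw [((helm_eqOn κ hΩ hu (by omega)).dirDeriv_iterate_of_isOpen hΩ b).dirDeriv_iterate_of_isOpen
      hΩ a hp,
    ((hlin _ b (hA.of_le (by simp)) (hB.of_le (by simp))
      (hu₀.of_le (by simp))).dirDeriv_iterate_of_isOpen hΩ a) hp,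
    hlin _ a (hA.dirDeriv_iterate_of_isOpen hΩ) (hB.dirDeriv_iterate_of_isOpen hΩ)
      (hu₀.dirDeriv_iterate_of_isOpen hΩ) hp,
    Pi.add_apply, Pi.add_apply, Pi.add_apply, Pi.add_apply,
    (hcomm.dirDeriv_iterate_of_isOpen hΩ a) hp,
    Function.iterate_add_apply, Function.iterate_add_apply]

theorem pd_add_two (κ : ℝ) (hΩ : IsOpen Ω) (hu : ContDiffOn ℝ N u Ω) {a b : ℕ}
    (hab : a + b + 2 ≤ N) {x y : ℝ} (hxy : (x, y) ∈ Ω) :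
    pd u a (b + 2) x y =
      pd (helm κ u) a b x y - pd u (a + 2) b x y - (κ : ℂ) ^ 2 * pd u a b x y := by
  have hu₂ : ContDiffOn ℝ (a + b + 2 : ℕ) u Ω := hu.of_le (by exact_mod_cast hab)
  rw [pd_eq_dirDeriv_iterate hΩ (contDiffOn_helm κ hΩ hu₂) le_rfl hxy,
    dirDeriv_iterate_helm κ hΩ hu₂ hxy, pd_eq_dirDeriv_iterate hΩ hu (by omega) hxy,
    pd_eq_dirDeriv_iterate hΩ hu (by omega) hxy, pd_eq_dirDeriv_iterate hΩ hu (by omega) hxy,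
    Pi.add_apply, Pi.add_apply, Pi.smul_apply, smul_eq_mul]
  ring

theorem pd_eq_recSol (κ : ℝ) (hΩ : IsOpen Ω) (hu : ContDiffOn ℝ N u Ω) {x y : ℝ}
    (hxy : (x, y) ∈ Ω) (n m : ℕ) (hmn : m + n ≤ N) :
    pd u m n x y = recSol ((κ : ℂ) ^ 2) (fun b a => pd u a b x y)
      (fun b a => pd (helm κ u) a b x y) n m := by
  induction n using Nat.strong_induction_on generalizing m with
  | _ n ih =>
    rcases lt_or_ge n 2 with hn | hn
    · rw [recSol_of_lt_two _ _ _ hn]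
    · obtain ⟨n, rfl⟩ := Nat.exists_eq_add_of_le' hn
      rw [recSol_add_two, Pi.sub_apply, shiftAdd_apply, pd_add_two κ hΩ hu (by omega) hxy,
        ← ih n (by omega) m (by omega), ← ih n (by omega) (m + 2) (by omega)]
      ring

end Plane

end Helmholtz

/-- dependence of `u^{(m,n)}` for `(n,m) ∈ Λ_{M+1}^2` on lower-order
`y`-derivatives, via the Helmholtz equation `Δu + κ²u = f`. -/
theorem statement1 (κ : ℝ) (M : ℕ) (Ω : Set (ℝ × ℝ)) (hΩ : IsOpen Ω)
    (xs ys : ℝ) (hmem : (xs, ys) ∈ Ω) (u : ℝ × ℝ → ℂ)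
    (hu : ContDiffOn ℝ ((M : ℕ∞) + 1) u Ω) :
    ∀ m n : ℕ, (n, m) ∈ Lam2 (M + 1) →
      pd u m n xs ys =
        (-1 : ℂ) ^ (n / 2) *
            ∑ q ∈ Finset.range (n / 2 + 1),
              (Nat.choose (n / 2) q : ℂ) * (κ : ℂ) ^ (2 * q) *
                pd u (2 * (n / 2) + m - 2 * q) (n % 2) xs ys
        + ∑ q ∈ Finset.Icc 1 (n / 2), ∑ j ∈ Finset.range q,
            (-1 : ℂ) ^ (q - 1) * (Nat.choose (q - 1) j : ℂ) *
              (κ : ℂ) ^ (2 * (q - j - 1)) *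
                pd (helm κ u) (m + 2 * j) (n - 2 * q) xs ys := by
  intro m n hΛ
  have hmn : m + n ≤ M + 1 := by
    simp only [Lam2, Lam, Finset.mem_filter] at hΛ
    omega
  have hu : ContDiffOn ℝ (M + 1 : ℕ) u Ω := by exact_mod_cast hu
  rw [Helmholtz.pd_eq_recSol κ hΩ hu hmem n m hmn, Helmholtz.recSol_apply]
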